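/- arXiv:1506.08766 — 4 statements merged into one kernel-verified Lean document; each statement's English description precedes it below -/
import Mathlib

section
/- Fix l > 0, a continuous function q : ℝ → ℝ with q(x) ≥ 0 for all x ∈ [0,l], and λ ∈ ℂ. If the solution S of the eigenvalue equation on [0,l] with S(0) = 0, S'(0) = 1 satisfies S(l) = 0, then λ is real and nonnegative: Im λ = 0 and Re λ ≥ 0. -/
/-!
Multiplying the equation by `conj S` and integrating by parts, the boundary terms vanishing since
`S 0 = S l = 0`, gives the Rayleigh identity `λ ∫ |S|² = ∫ |S'|² + ∫ q |S|²`. Its right-hand side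
is real and nonnegative, and `∫ |S|² > 0` because `S' 0 = 1`.
-/

open Set intervalIntegral Topology
open scoped ComplexConjugate

section

variable {a b : ℝ} {S S' S'' : ℝ → ℂ}

theorem integral_conj_mul_eq_neg_integral_norm_deriv_sq
    (hS : ∀ x ∈ uIcc a b, HasDerivAt S (S' x) x) (hS' : ∀ x ∈ uIcc a b, HasDerivAt S' (S'' x) x)
    (hS'' : ContinuousOn S'' (uIcc a b)) (ha : S a = 0) (hb : S b = 0) :
    ∫ x in a..b, conj (S x) * S'' x = -((∫ x in a..b, ‖S' x‖ ^ 2 : ℝ) : ℂ) := by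
  have hS_cont : ContinuousOn S (uIcc a b) := fun x hx ↦ (hS x hx).continuousAt.continuousWithinAt
  have hS'_cont : ContinuousOn S' (uIcc a b) :=
    fun x hx ↦ (hS' x hx).continuousAt.continuousWithinAt
  have hint₁ : IntervalIntegrable (fun x ↦ conj (S' x) * S' x) MeasureTheory.volume a b :=
    (hS'_cont.star.mul hS'_cont).intervalIntegrable
  have hint₂ : IntervalIntegrable (fun x ↦ conj (S x) * S'' x) MeasureTheory.volume a b :=
    (hS_cont.star.mul hS'').intervalIntegrable
  have hFTC : ∫ x in a..b, (conj (S' x) * S' x + conj (S x) * S'' x) =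
      conj (S b) * S' b - conj (S a) * S' a :=
    integral_eq_sub_of_hasDerivAt (fun x hx ↦ (hS x hx).star.mul (hS' x hx)) (hint₁.add hint₂)
  rw [integral_add hint₁ hint₂, ha, hb] at hFTC
  simp only [Complex.conj_mul', ← Complex.ofReal_pow, integral_ofReal, map_zero, zero_mul,
    sub_zero] at hFTC
  linear_combination hFTC

theorem mul_integral_norm_sq_eq_of_dirichlet {q : ℝ → ℝ} {lam : ℂ}
    (hS : ∀ x ∈ uIcc a b, HasDerivAt S (S' x) x) (hS' : ∀ x ∈ uIcc a b, HasDerivAt S' (S'' x) x)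
    (hS'' : ContinuousOn S'' (uIcc a b))
    (hode : ∀ x ∈ uIcc a b, -S'' x + (q x : ℂ) * S x = lam * S x) (ha : S a = 0) (hb : S b = 0) :
    lam * ((∫ x in a..b, ‖S x‖ ^ 2 : ℝ) : ℂ) =
      ((∫ x in a..b, ‖S' x‖ ^ 2 : ℝ) : ℂ) + ((∫ x in a..b, q x * ‖S x‖ ^ 2 : ℝ) : ℂ) := by
  have hpointwise : ∀ x ∈ uIcc a b,
      ((q x * ‖S x‖ ^ 2 : ℝ) : ℂ) = conj (S x) * S'' x + lam * ((‖S x‖ ^ 2 : ℝ) : ℂ) := by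
    intro x hx
    push_cast
    rw [← Complex.conj_mul']
    linear_combination conj (S x) * hode x hx
  have hS_cont : ContinuousOn S (uIcc a b) := fun x hx ↦ (hS x hx).continuousAt.continuousWithinAt
  have hint₁ : IntervalIntegrable (fun x ↦ conj (S x) * S'' x) MeasureTheory.volume a b :=
    (hS_cont.star.mul hS'').intervalIntegrable
  have hint₂ : IntervalIntegrable (fun x ↦ lam * ((‖S x‖ ^ 2 : ℝ) : ℂ)) MeasureTheory.volume a b :=
    (continuousOn_const.mul (Complex.continuous_ofReal.comp_continuousOn
      (hS_cont.norm.pow 2))).intervalIntegrable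
  rw [← integral_ofReal (f := fun x ↦ q x * ‖S x‖ ^ 2), integral_congr hpointwise,
    integral_add hint₁ hint₂, integral_const_mul, integral_ofReal,
    integral_conj_mul_eq_neg_integral_norm_deriv_sq hS hS' hS'' ha hb]
  ring

theorem integral_norm_sq_pos_of_hasDerivAt (hab : a < b) (hS : ContinuousOn S (Icc a b)) {v : ℂ}
    (hv : HasDerivAt S v a) (hv₀ : v ≠ 0) : 0 < ∫ x in a..b, ‖S x‖ ^ 2 := by
  have hne : ∀ᶠ x in 𝓝[>] a, S x ≠ 0 :=
    nhdsWithin_mono _ (fun x hx ↦ ne_of_gt hx) (hv.eventually_ne hv₀)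
  obtain ⟨c, hc, hSc⟩ := (hne.and (Ioo_mem_nhdsGT hab)).exists
  exact integral_pos hab (hS.norm.pow 2) (fun x _ ↦ by positivity)
    ⟨c, Ioo_subset_Icc_self hSc, by positivity⟩

end

theorem dirichlet_eigenvalue_nonneg_general (l : ℝ) (hl : 0 < l)
    (q : ℝ → ℝ)
    (hq_nonneg : ∀ x ∈ Icc 0 l, 0 ≤ q x)
    (lam : ℂ) (S S' S'' : ℝ → ℂ)
    (hS : ∀ x ∈ Icc 0 l, HasDerivAt S (S' x) x)
    (hS' : ∀ x ∈ Icc 0 l, HasDerivAt S' (S'' x) x)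
    (hS'' : ContinuousOn S'' (Icc 0 l))
    (hode : ∀ x ∈ Icc 0 l, -S'' x + (q x : ℂ) * S x = lam * S x)
    (hS0 : S 0 = 0) (hS'0 : S' 0 = 1) (hSl : S l = 0) :
    lam.im = 0 ∧ 0 ≤ lam.re := by
  have hS_cont : ContinuousOn S (Icc 0 l) := fun x hx ↦ (hS x hx).continuousAt.continuousWithinAt
  have hS_deriv₀ : HasDerivAt S 1 0 := hS'0 ▸ hS 0 (left_mem_Icc.2 hl.le)
  have hA := integral_norm_sq_pos_of_hasDerivAt hl hS_cont hS_deriv₀ one_ne_zero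
  have hD : 0 ≤ ∫ x in 0..l, ‖S' x‖ ^ 2 := integral_nonneg hl.le fun _ _ ↦ by positivity
  have hQ : 0 ≤ ∫ x in 0..l, q x * ‖S x‖ ^ 2 :=
    integral_nonneg hl.le fun x hx ↦ mul_nonneg (hq_nonneg x hx) (by positivity)
  rw [← uIcc_of_le hl.le] at hS hS' hS'' hode
  have hrayleigh := mul_integral_norm_sq_eq_of_dirichlet hS hS' hS'' hode hS0 hSl
  have hlam : lam = (((∫ x in 0..l, ‖S' x‖ ^ 2) + ∫ x in 0..l, q x * ‖S x‖ ^ 2) /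
      ∫ x in 0..l, ‖S x‖ ^ 2 : ℝ) := by
    rw [Complex.ofReal_div, eq_div_iff (by exact_mod_cast hA.ne'), hrayleigh]
    push_cast
    ring
  rw [hlam, Complex.ofReal_im, Complex.ofReal_re]
  exact ⟨rfl, by positivity⟩

/-- If the solution `S` of `-y'' + q y = λ y` on `[0, l]` with `S 0 = 0`, `S' 0 = 1` and
`q ≥ 0` on `[0, l]` satisfies `S l = 0`, then `λ` is real and nonnegative. -/
theorem dirichlet_eigenvalue_nonneg (l : ℝ) (hl : 0 < l)
    (q : ℝ → ℝ) (hq_cont : ContinuousOn q (Icc 0 l))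
    (hq_nonneg : ∀ x ∈ Icc 0 l, 0 ≤ q x)
    (lam : ℂ) (S S' S'' : ℝ → ℂ)
    (hS : ∀ x ∈ Icc 0 l, HasDerivAt S (S' x) x)
    (hS' : ∀ x ∈ Icc 0 l, HasDerivAt S' (S'' x) x)
    (hS'' : ContinuousOn S'' (Icc 0 l))
    (hode : ∀ x ∈ Icc 0 l, -S'' x + (q x : ℂ) * S x = lam * S x)
    (hS0 : S 0 = 0) (hS'0 : S' 0 = 1) (hSl : S l = 0) :
    lam.im = 0 ∧ 0 ≤ lam.re :=
  dirichlet_eigenvalue_nonneg_general l hl q hq_nonneg lam S S' S'' hS hS' hS'' hode hS0 hS'0 hSl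
end

section
/- Fix l > 0, a continuous function q : ℝ → ℝ satisfying the evenness condition q(l − x) = q(x) for all x ∈ [0,l], and λ ∈ ℂ, and let C and S be the solutions of the eigenvalue equation on [0,l] with C(0) = 1, C'(0) = 0 and S(0) = 0, S'(0) = 1. Then for every x ∈ [0,l], C(l − x) = S'(l)·C(x) − C'(l)·S(x); in particular, taking x = 0, C(l) = S'(l). -/
/-!
The reflection `y x = C (l - x)` solves the same equation because `q` is even, and Wronskians of
two solutions are constant. The Wronskian of `y` and `S` is `C l` at `0` and `S' l` at `l`, so
`C l = S' l`; the Wronskian of `y` and `C` is `C' l`, and that of `C` and `S` is `1`. The identity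
`u W(v,w) - v W(u,w) + w W(u,v) = 0` then expresses `y` in the basis `C`, `S`.
-/

open Set

def IsSolutionOn (Q : ℝ → ℂ) (s : Set ℝ) (y y' : ℝ → ℂ) : Prop :=
  ∀ x ∈ s, HasDerivAt y (y' x) x ∧ HasDerivAt y' (Q x * y x) x

def wronskian (u u' v v' : ℝ → ℂ) (x : ℝ) : ℂ :=
  u x * v' x - u' x * v x

namespace IsSolutionOn

variable {Q : ℝ → ℂ} {u u' v v' : ℝ → ℂ}

theorem hasDerivAt_wronskian {s : Set ℝ} (hu : IsSolutionOn Q s u u')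
    (hv : IsSolutionOn Q s v v') {x : ℝ} (hx : x ∈ s) :
    HasDerivAt (wronskian u u' v v') 0 x := by
  obtain ⟨hu, hu'⟩ := hu x hx
  obtain ⟨hv, hv'⟩ := hv x hx
  have h := (hu.mul hv').sub (hu'.mul hv)
  rwa [show u' x * v' x + u x * (Q x * v x) - (Q x * u x * v x + u' x * v' x) = 0 by ring] at h

theorem wronskian_eq {a b : ℝ} (hu : IsSolutionOn Q (Icc a b) u u')
    (hv : IsSolutionOn Q (Icc a b) v v') {x : ℝ} (hx : x ∈ Icc a b) :
    wronskian u u' v v' x = wronskian u u' v v' a :=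
  constant_of_has_deriv_right_zero
    (fun _ ht => (hu.hasDerivAt_wronskian hv ht).continuousAt.continuousWithinAt)
    (fun _ ht => (hu.hasDerivAt_wronskian hv (Ico_subset_Icc_self ht)).hasDerivWithinAt) x hx

theorem reflect {l : ℝ} (hQ : ∀ x ∈ Icc 0 l, Q (l - x) = Q x)
    (hu : IsSolutionOn Q (Icc 0 l) u u') :
    IsSolutionOn Q (Icc 0 l) (fun x => u (l - x)) (fun x => -u' (l - x)) := by
  intro x hx
  have hlx : l - x ∈ Icc 0 l := ⟨by linarith [hx.2], by linarith [hx.1]⟩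
  obtain ⟨hu, hu'⟩ := hu (l - x) hlx
  refine ⟨hu.comp_const_sub l x, ?_⟩
  have h := (hu'.comp_const_sub l x).neg
  rwa [neg_neg, hQ x hx] at h

end IsSolutionOn

theorem even_potential_identity_general (l : ℝ) (hl : 0 < l)
    (q : ℝ → ℝ)
    (hq_even : ∀ x ∈ Icc 0 l, q (l - x) = q x) (lam : ℂ)
    (C C' C'' S S' S'' : ℝ → ℂ)
    (hC : ∀ x ∈ Icc 0 l, HasDerivAt C (C' x) x)
    (hC' : ∀ x ∈ Icc 0 l, HasDerivAt C' (C'' x) x)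
    (hCode : ∀ x ∈ Icc 0 l, -C'' x + (q x : ℂ) * C x = lam * C x)
    (hS : ∀ x ∈ Icc 0 l, HasDerivAt S (S' x) x)
    (hS' : ∀ x ∈ Icc 0 l, HasDerivAt S' (S'' x) x)
    (hSode : ∀ x ∈ Icc 0 l, -S'' x + (q x : ℂ) * S x = lam * S x)
    (hC0 : C 0 = 1) (hC'0 : C' 0 = 0) (hS0 : S 0 = 0) (hS'0 : S' 0 = 1) :
    (∀ x ∈ Icc 0 l, C (l - x) = S' l * C x - C' l * S x) ∧ C l = S' l := by
  set Q : ℝ → ℂ := fun x => (q x : ℂ) - lam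
  have hCsol : IsSolutionOn Q (Icc 0 l) C C' := fun x hx =>
    ⟨hC x hx, by convert hC' x hx using 1; linear_combination hCode x hx⟩
  have hSsol : IsSolutionOn Q (Icc 0 l) S S' := fun x hx =>
    ⟨hS x hx, by convert hS' x hx using 1; linear_combination hSode x hx⟩
  have hysol := hCsol.reflect (fun x hx => by simp only [Q, hq_even x hx])
  have hll : l ∈ Icc 0 l := right_mem_Icc.mpr hl.le
  have hCl : C l = S' l := by
    simpa [wronskian, hC0, hC'0, hS0, hS'0] using (hysol.wronskian_eq hSsol hll).symm
  refine ⟨fun x hx => ?_, hCl⟩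
  have hyS := hysol.wronskian_eq hSsol hx
  have hyC := hysol.wronskian_eq hCsol hx
  have hCS := hCsol.wronskian_eq hSsol hx
  simp only [wronskian, sub_zero, hC0, hC'0, hS0, hS'0] at hyS hyC hCS
  linear_combination -C (l - x) * hCS + C x * hyS - S x * hyC + C x * hCl

/-- For an even potential, `q (l - x) = q x` on `[0, l]`, the solutions `C`, `S` of
`-y'' + q y = λ y` with `C 0 = 1`, `C' 0 = 0`, `S 0 = 0`, `S' 0 = 1` satisfy
`C (l - x) = S' l * C x - C' l * S x` on `[0, l]`; in particular `C l = S' l`. -/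
theorem even_potential_identity (l : ℝ) (hl : 0 < l)
    (q : ℝ → ℝ) (hq_cont : ContinuousOn q (Icc 0 l))
    (hq_even : ∀ x ∈ Icc 0 l, q (l - x) = q x) (lam : ℂ)
    (C C' C'' S S' S'' : ℝ → ℂ)
    (hC : ∀ x ∈ Icc 0 l, HasDerivAt C (C' x) x)
    (hC' : ∀ x ∈ Icc 0 l, HasDerivAt C' (C'' x) x)
    (hC'' : ContinuousOn C'' (Icc 0 l))
    (hCode : ∀ x ∈ Icc 0 l, -C'' x + (q x : ℂ) * C x = lam * C x)
    (hS : ∀ x ∈ Icc 0 l, HasDerivAt S (S' x) x)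
    (hS' : ∀ x ∈ Icc 0 l, HasDerivAt S' (S'' x) x)
    (hS'' : ContinuousOn S'' (Icc 0 l))
    (hSode : ∀ x ∈ Icc 0 l, -S'' x + (q x : ℂ) * S x = lam * S x)
    (hC0 : C 0 = 1) (hC'0 : C' 0 = 0) (hS0 : S 0 = 0) (hS'0 : S' 0 = 1) :
    (∀ x ∈ Icc 0 l, C (l - x) = S' l * C x - C' l * S x) ∧ C l = S' l :=
  even_potential_identity_general l hl q hq_even lam C C' C'' S S' S'' hC hC' hCode hS hS' hSode hC0
    hC'0 hS0 hS'0
end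

section
/- Let M ≥ 1, let s_1, …, s_M be nonzero complex numbers, and let ξ_1, …, ξ_M be complex numbers with ξ_m ≠ 0 and ξ_m² + 1 ≠ 0 for all m. For each m define the vector v_m ∈ ℂ^M whose m-th component is (1/ξ_m² − 1)/s_m and whose j-th component for j ≠ m is −2/s_j. If ∑_{m=1}^{M} ξ_m²/(ξ_m² + 1) ≠ 1/2, then the vectors v_1, …, v_M are linearly independent over ℂ. -/
/-! Up to the invertible diagonal scaling by `s⁻¹`, the gradients are `v_m = b_m e_m − 2·𝟙` with
`b_m = (ξ_m² + 1)/ξ_m²`. A relation `∑ g_m (b_m e_m − c·𝟙) = 0` reads `g_j b_j = c·∑ g` in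
coordinate `j`; summing `g_j = c (∑ g)/b_j` over `j` gives `(∑ g)(1 − c ∑ b⁻¹) = 0`, and for `c = 2`
the second factor is `1 − 2 ∑ ξ_m²/(ξ_m² + 1) ≠ 0`. Hence `∑ g = 0` and then every `g_j = 0`. -/

theorem LinearIndependent.mul_left_of_isUnit {K ι κ : Type*} [Field K] {v : κ → ι → K}
    (hv : LinearIndependent K v) {t : ι → K} (ht : IsUnit t) :
    LinearIndependent K (fun k => t * v k) :=
  hv.map' (LinearMap.mulLeft K t) (LinearMap.ker_eq_bot.mpr ht.mul_right_injective)

theorem linearIndependent_single_sub_const {K ι : Type*} [Field K] [Fintype ι] [DecidableEq ι]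
    (b : ι → K) (c : K) (hb : ∀ i, b i ≠ 0) (hc : c * ∑ i, (b i)⁻¹ ≠ 1) :
    LinearIndependent K (fun i => Pi.single i (b i) - Function.const ι c) := by
  rw [Fintype.linearIndependent_iff]
  intro g hg
  set T := ∑ i, g i with hT
  have hcoord : ∀ j, g j = c * T * (b j)⁻¹ := by
    intro j
    have hj := congrFun hg j
    simp only [Finset.sum_apply, Pi.smul_apply, Pi.sub_apply, Pi.single_apply,
      Function.const_apply, smul_eq_mul, mul_sub, Finset.sum_sub_distrib, mul_ite, mul_zero,
      Finset.sum_ite_eq, Finset.mem_univ, if_true, ← Finset.sum_mul, Pi.zero_apply] at hj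
    field_simp [hb j]
    linear_combination hj
  have hT0 : T = 0 := by
    have hsum : T = T * (c * ∑ i, (b i)⁻¹) := by
      conv_lhs => rw [hT]
      simp only [hcoord, Finset.mul_sum]
      exact Finset.sum_congr rfl fun i _ => by ring
    have hfactor : T * (1 - c * ∑ i, (b i)⁻¹) = 0 := by linear_combination hsum
    exact (mul_eq_zero.mp hfactor).resolve_right (sub_ne_zero.mpr hc.symm)
  intro j
  rw [hcoord j, hT0, mul_zero, zero_mul]

theorem multiplier_gradients_linearIndependent_general (M : ℕ)
    (s ξ : Fin M → ℂ)
    (hs : ∀ m, s m ≠ 0) (hξ : ∀ m, ξ m ≠ 0) (hξ1 : ∀ m, ξ m ^ 2 + 1 ≠ 0)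
    (hsum : ∑ m : Fin M, ξ m ^ 2 / (ξ m ^ 2 + 1) ≠ 1 / 2) :
    LinearIndependent ℂ
      (fun m : Fin M => fun j : Fin M =>
        if j = m then (1 / ξ m ^ 2 - 1) / s m else -2 / s j) := by
  set b : Fin M → ℂ := fun m => (ξ m ^ 2 + 1) / ξ m ^ 2 with hb_def
  have hb : ∀ m, b m ≠ 0 := fun m => div_ne_zero (hξ1 m) (pow_ne_zero 2 (hξ m))
  have hc : (2 : ℂ) * ∑ m, (b m)⁻¹ ≠ 1 := by
    simp only [hb_def, inv_div]
    contrapose! hsum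
    linear_combination hsum / 2
  have hunit : IsUnit (fun j => (s j)⁻¹) := Pi.isUnit_iff.mpr fun j => (inv_ne_zero (hs j)).isUnit
  have hfamily : (fun m : Fin M => fun j : Fin M =>
      if j = m then (1 / ξ m ^ 2 - 1) / s m else -2 / s j) =
      fun m => (fun j => (s j)⁻¹) * (Pi.single m (b m) - Function.const (Fin M) 2) := by
    ext m j
    by_cases hjm : j = m
    · subst hjm
      simp only [hb_def, Pi.mul_apply, Pi.sub_apply, Pi.single_eq_same, Function.const_apply,
        if_true]
      field_simp [hξ j]
      ring
    · simp [hjm, div_eq_inv_mul]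
  rw [hfamily]
  exact (linearIndependent_single_sub_const b 2 hb hc).mul_left_of_isUnit hunit

/-- Linear independence of the gradients of the multiplier-equation polynomials: if
`∑ ξ_m²/(ξ_m² + 1) ≠ 1/2`, the vectors `v_m` with `m`-th component `(1/ξ_m² − 1)/s_m`
and `j`-th component `−2/s_j` for `j ≠ m` are linearly independent over `ℂ`. -/
theorem multiplier_gradients_linearIndependent (M : ℕ) (hM : 1 ≤ M)
    (s ξ : Fin M → ℂ)
    (hs : ∀ m, s m ≠ 0) (hξ : ∀ m, ξ m ≠ 0) (hξ1 : ∀ m, ξ m ^ 2 + 1 ≠ 0)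
    (hsum : ∑ m : Fin M, ξ m ^ 2 / (ξ m ^ 2 + 1) ≠ 1 / 2) :
    LinearIndependent ℂ
      (fun m : Fin M => fun j : Fin M =>
        if j = m then (1 / ξ m ^ 2 - 1) / s m else -2 / s j) :=
  multiplier_gradients_linearIndependent_general M s ξ hs hξ hξ1 hsum
end

section
/- Let μ₁, μ₂, C₁, C₂, S₁, S₂ be complex numbers with S₁ ≠ 0, S₂ ≠ 0, μ₁ ≠ 0, μ₂ ≠ 0, satisfying the coupled system (μ₁² − 1)/(S₁·μ₁) = 2·(μ₁ − C₁)/S₁ + 2·(μ₂ − C₂)/S₂ and (μ₂² − 1)/(S₂·μ₂) = 2·(μ₁ − C₁)/S₁ + 2·(μ₂ − C₂)/S₂. Then μ₁ satisfies the quartic equation 3·S₂²·μ₁⁴ − 8·(S₁·C₂·S₂ + S₂²·C₁)·μ₁³ + (2·S₂² − 4·S₁² + 4·S₂²·C₁² + 4·C₂²·S₁² + 8·S₁·C₂·S₂·C₁)·μ₁² − S₂² = 0. -/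
/-! The first equation, cleared of denominators, is linear in `μ₂ - C₂`; the second is a
quadratic in `μ₂`. Substituting the linear relation into the quadratic eliminates `μ₂`. -/

section Elimination

variable {K : Type*}

theorem multiplier_linear_of_eq [Field K] {μ₁ μ₂ C₁ C₂ S₁ S₂ : K}
    (hS₁ : S₁ ≠ 0) (hS₂ : S₂ ≠ 0) (hμ₁ : μ₁ ≠ 0)
    (h : (μ₁ ^ 2 - 1) / (S₁ * μ₁) = 2 * (μ₁ - C₁) / S₁ + 2 * (μ₂ - C₂) / S₂) :
    2 * S₁ * μ₁ * (μ₂ - C₂) = -S₂ * (μ₁ ^ 2 - 2 * C₁ * μ₁ + 1) := by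
  field_simp at h
  linear_combination -h

theorem multiplier_quadratic_of_eq [Field K] {μ₁ μ₂ C₁ C₂ S₁ S₂ : K}
    (hS₁ : S₁ ≠ 0) (hS₂ : S₂ ≠ 0) (hμ₂ : μ₂ ≠ 0)
    (h : (μ₂ ^ 2 - 1) / (S₂ * μ₂) = 2 * (μ₁ - C₁) / S₁ + 2 * (μ₂ - C₂) / S₂) :
    S₁ * μ₂ ^ 2 + 2 * (S₂ * (μ₁ - C₁) - S₁ * C₂) * μ₂ + S₁ = 0 := by
  field_simp at h
  linear_combination -h

/-- Multiplying the quadratic by `4 S₁ μ₁²` turns it into a quadratic in `2 S₁ μ₁ (μ₂ - C₂)`,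
which the linear relation replaces by a polynomial in `μ₁`. -/
theorem multiplier_quartic_of_linear_of_quadratic [CommRing K] {μ₁ μ₂ C₁ C₂ S₁ S₂ : K}
    (hlin : 2 * S₁ * μ₁ * (μ₂ - C₂) = -S₂ * (μ₁ ^ 2 - 2 * C₁ * μ₁ + 1))
    (hquad : S₁ * μ₂ ^ 2 + 2 * (S₂ * (μ₁ - C₁) - S₁ * C₂) * μ₂ + S₁ = 0) :
    3 * S₂ ^ 2 * μ₁ ^ 4 - 8 * (S₁ * C₂ * S₂ + S₂ ^ 2 * C₁) * μ₁ ^ 3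
      + (2 * S₂ ^ 2 - 4 * S₁ ^ 2 + 4 * S₂ ^ 2 * C₁ ^ 2 + 4 * C₂ ^ 2 * S₁ ^ 2
          + 8 * S₁ * C₂ * S₂ * C₁) * μ₁ ^ 2
      - S₂ ^ 2 = 0 := by
  linear_combination (-4 * S₁ * μ₁ ^ 2) * hquad
    + (2 * S₁ * μ₁ * (μ₂ - C₂) - S₂ * (μ₁ ^ 2 - 2 * C₁ * μ₁ + 1)
      + 4 * S₂ * μ₁ * (μ₁ - C₁)) * hlin

end Elimination

/-- Elimination of `μ₂` from the coupled system of multiplier equations for the metric Cayley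
graph `𝒯₂` of the free group on two generators: `μ₁` satisfies a quartic equation with
coefficients built from `C₁, C₂, S₁, S₂`. -/
theorem multiplier_quartic (μ₁ μ₂ C₁ C₂ S₁ S₂ : ℂ)
    (hS₁ : S₁ ≠ 0) (hS₂ : S₂ ≠ 0) (hμ₁ : μ₁ ≠ 0) (hμ₂ : μ₂ ≠ 0)
    (h1 : (μ₁ ^ 2 - 1) / (S₁ * μ₁) = 2 * (μ₁ - C₁) / S₁ + 2 * (μ₂ - C₂) / S₂)
    (h2 : (μ₂ ^ 2 - 1) / (S₂ * μ₂) = 2 * (μ₁ - C₁) / S₁ + 2 * (μ₂ - C₂) / S₂) :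
    3 * S₂ ^ 2 * μ₁ ^ 4 - 8 * (S₁ * C₂ * S₂ + S₂ ^ 2 * C₁) * μ₁ ^ 3
      + (2 * S₂ ^ 2 - 4 * S₁ ^ 2 + 4 * S₂ ^ 2 * C₁ ^ 2 + 4 * C₂ ^ 2 * S₁ ^ 2
          + 8 * S₁ * C₂ * S₂ * C₁) * μ₁ ^ 2
      - S₂ ^ 2 = 0 :=
  multiplier_quartic_of_linear_of_quadratic (multiplier_linear_of_eq hS₁ hS₂ hμ₁ h1)
    (multiplier_quadratic_of_eq hS₁ hS₂ hμ₂ h2)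
end
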